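/- arXiv:2507.15529 — 2 statements merged into one kernel-verified Lean document; each statement's English description precedes it below -/
import Mathlib

section
/- Fix α ∈ [0,1) and let T be any monotone total order on the set Ω of nondecreasing n-tuples over S; assume 𝒢(Ω(z, T'), α) is nonempty for all z ∈ Ω and all total orders T' considered. Let x ∈ Ω and let s, s' ∈ S be such that the constant tuples satisfy 𝑺 ≤_T x ≤_T 𝑺', where 𝑺 = (s,…,s) and 𝑺' = (s',…,s'). Then B_{T_h}^*(𝑺) ≤ B_T^*(x) ≤ B_{T_ℓ}^*(𝑺'). -/
/-! The upper sets are nested: `Ω(𝑺', T_ℓ) ⊆ Ω(x, T) ⊆ Ω(𝑺, T_h)`. A sorted tuple that is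
`T_ℓ`-above `𝑺'` dominates `𝑺'` coordinatewise, so it is `T`-above `𝑺' ≥_T x`; a sorted tuple
`T`-above `𝑺` either has last entry `> s`, making it `T_h`-above `𝑺`, or is dominated by `𝑺`
and hence equals `𝑺` by antisymmetry. A larger set has larger probability under every `F`,
hence a larger likely set and a smaller infimum of the mean. -/

noncomputable section

/-- Distributions on the finite support `S`, viewed as points of the probability
simplex inside `EuclideanSpace ℝ S` (Euclidean metric). -/
def distSet (S : Finset ℝ) : Set (EuclideanSpace ℝ ↥S) :=
  {F | (∀ s, 0 ≤ F s) ∧ ∑ s, F s = 1}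

/-- Mean of a distribution on `S`. -/
def distMean (S : Finset ℝ) (F : EuclideanSpace ℝ ↥S) : ℝ :=
  ∑ s : ↥S, F s * (s : ℝ)

open Classical in
/-- `P_F[A]`: probability of a set `A` of `n`-tuples under `n` i.i.d. draws from `F`. -/
def probOf (S : Finset ℝ) (n : ℕ) (F : EuclideanSpace ℝ ↥S)
    (A : Set (Fin n → ↥S)) : ℝ :=
  ∑ y : Fin n → ↥S, if y ∈ A then ∏ i, F (y i) else 0

/-- The interior likely set `𝒢(A, α)`. -/
def intLikely (S : Finset ℝ) (n : ℕ) (A : Set (Fin n → ↥S)) (α : ℝ) :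
    Set (EuclideanSpace ℝ ↥S) :=
  {F | F ∈ distSet S ∧ α < probOf S n F A}

/-- The likely set `𝒻(A, α)`: the closure of `𝒢(A, α)`. -/
def likely (S : Finset ℝ) (n : ℕ) (A : Set (Fin n → ↥S)) (α : ℝ) :
    Set (EuclideanSpace ℝ ↥S) :=
  closure (intLikely S n A α)

/-- `Ω`: the set of nondecreasing (`sorted`) `n`-tuples over `S`. -/
def sortedTuples (S : Finset ℝ) (n : ℕ) : Set (Fin n → ↥S) :=
  {x | Monotone x}

/-- The sorted version of a tuple. -/
def sortTup (S : Finset ℝ) (n : ℕ) (y : Fin n → ↥S) : Fin n → ↥S :=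
  y ∘ Tuple.sort y

/-- Probability of a set `A ⊆ Ω` of sorted tuples, identifying tuples with
their sorted versions. -/
def probSorted (S : Finset ℝ) (n : ℕ) (F : EuclideanSpace ℝ ↥S)
    (A : Set (Fin n → ↥S)) : ℝ :=
  probOf S n F {y | sortTup S n y ∈ A}

/-- Interior likely set for a set of sorted tuples. -/
def intLikelySorted (S : Finset ℝ) (n : ℕ) (A : Set (Fin n → ↥S)) (α : ℝ) :
    Set (EuclideanSpace ℝ ↥S) :=
  {F | F ∈ distSet S ∧ α < probSorted S n F A}

/-- Likely set for a set of sorted tuples. -/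
def likelySorted (S : Finset ℝ) (n : ℕ) (A : Set (Fin n → ↥S)) (α : ℝ) :
    Set (EuclideanSpace ℝ ↥S) :=
  closure (intLikelySorted S n A α)

/-- Upper set `Ω(x, R)` of `x` under a relation `R` on `Ω`. -/
def upperSet (S : Finset ℝ) (n : ℕ) (r : (Fin n → ↥S) → (Fin n → ↥S) → Prop)
    (x : Fin n → ↥S) : Set (Fin n → ↥S) :=
  {y ∈ sortedTuples S n | r x y}

/-- Pessimal bound `B_R^*(x) = inf {E[F] : F ∈ 𝒻(Ω(x,R), α)}`. -/
def pessimal (S : Finset ℝ) (n : ℕ) (r : (Fin n → ↥S) → (Fin n → ↥S) → Prop)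
    (α : ℝ) (x : Fin n → ↥S) : ℝ :=
  sInf (distMean S '' likelySorted S n (upperSet S n r x) α)

/-- Low lexicographic order: `x ≤_{T_ℓ} y` iff `x = y` or `x i < y i` at the
smallest index `i` where `x` and `y` differ. -/
def lexLowLE {n : ℕ} {α : Type*} [LinearOrder α] (x y : Fin n → α) : Prop :=
  x = y ∨ ∃ i, x i < y i ∧ ∀ j, j < i → x j = y j

/-- High lexicographic order: `x ≤_{T_h} y` iff `x = y` or `x i < y i` at the
largest index `i` where `x` and `y` differ. -/
def lexHighLE {n : ℕ} {α : Type*} [LinearOrder α] (x y : Fin n → α) : Prop :=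
  x = y ∨ ∃ i, x i < y i ∧ ∀ j, i < j → x j = y j

section Distributions

variable (S : Finset ℝ) (n : ℕ)

lemma isClosed_distSet : IsClosed (distSet S) := by
  have hnonneg : IsClosed {F : EuclideanSpace ℝ ↥S | ∀ s, 0 ≤ F s} := by
    simp only [Set.ofPred_forall]
    exact isClosed_iInter fun s => isClosed_le continuous_const (EuclideanSpace.proj s).continuous
  have hsum : IsClosed {F : EuclideanSpace ℝ ↥S | ∑ s, F s = 1} :=
    isClosed_eq (continuous_finsetSum _ fun s _ => (EuclideanSpace.proj s).continuous)
      continuous_const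
  exact hnonneg.inter hsum

lemma min'_le_distMean (hS : S.Nonempty) {F : EuclideanSpace ℝ ↥S} (hF : F ∈ distSet S) :
    S.min' hS ≤ distMean S F := by
  obtain ⟨hnonneg, hsum⟩ := hF
  calc S.min' hS = ∑ s : ↥S, F s * S.min' hS := by rw [← Finset.sum_mul, hsum, one_mul]
    _ ≤ ∑ s : ↥S, F s * (s : ℝ) :=
        Finset.sum_le_sum fun s _ => mul_le_mul_of_nonneg_left (S.min'_le s s.2) (hnonneg s)

variable {S n}

lemma probSorted_mono {A B : Set (Fin n → ↥S)} (hAB : A ⊆ B) {F : EuclideanSpace ℝ ↥S}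
    (hF : F ∈ distSet S) : probSorted S n F A ≤ probSorted S n F B := by
  classical
  refine Finset.sum_le_sum fun y _ => ?_
  have hprod : 0 ≤ ∏ i, F (y i) := Finset.prod_nonneg fun i _ => hF.1 (y i)
  by_cases hA : sortTup S n y ∈ A
  · simp [hA, hAB hA]
  · by_cases hB : sortTup S n y ∈ B <;> simp [hA, hB, hprod]

lemma likelySorted_mono {A B : Set (Fin n → ↥S)} (hAB : A ⊆ B) (α : ℝ) :
    likelySorted S n A α ⊆ likelySorted S n B α :=
  closure_mono fun _ ⟨hF, hα⟩ => ⟨hF, hα.trans_le (probSorted_mono hAB hF)⟩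

lemma likelySorted_subset_distSet (A : Set (Fin n → ↥S)) (α : ℝ) :
    likelySorted S n A α ⊆ distSet S :=
  closure_minimal (fun _ hF => hF.1) (isClosed_distSet S)

lemma pessimal_le_pessimal_of_upperSet_subset (hS : S.Nonempty) {α : ℝ}
    {r r' : (Fin n → ↥S) → (Fin n → ↥S) → Prop} {x x' : Fin n → ↥S}
    (hne : (intLikelySorted S n (upperSet S n r x) α).Nonempty)
    (hsub : upperSet S n r x ⊆ upperSet S n r' x') :
    pessimal S n r' α x' ≤ pessimal S n r α x := by
  refine csInf_le_csInf ?_ ((hne.mono subset_closure).image _)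
    (Set.image_mono (likelySorted_mono hsub α))
  refine ⟨S.min' hS, ?_⟩
  rintro _ ⟨F, hF, rfl⟩
  exact min'_le_distMean S hS (likelySorted_subset_distSet _ α hF)

end Distributions

section Lex

variable {n : ℕ} {β : Type*} [LinearOrder β] {y : Fin n → β}

theorem Monotone.forall_le_or_lexHighLE_const (hy : Monotone y) (c : β) :
    (∀ i, y i ≤ c) ∨ lexHighLE (fun _ => c) y := by
  cases n with
  | zero => exact Or.inl fun i => i.elim0
  | succ m =>
    by_cases hlast : c < y (Fin.last m)
    · exact Or.inr (Or.inr ⟨Fin.last m, hlast, fun j hj => absurd (Fin.le_last j) hj.not_ge⟩)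
    · exact Or.inl fun i => (hy (Fin.le_last i)).trans (not_lt.mp hlast)

theorem Monotone.const_le_of_lexLowLE_const (hy : Monotone y) {c : β}
    (hcy : lexLowLE (fun _ => c) y) (k : Fin n) : c ≤ y k := by
  rcases hcy with rfl | ⟨i, hi, hbelow⟩
  · exact le_rfl
  · rcases lt_or_ge k i with hk | hk
    · exact (hbelow k hk).le
    · exact hi.le.trans (hy hk)

end Lex

theorem stmt12_general (S : Finset ℝ) (hS : S.Nonempty) (n : ℕ)
    (α : ℝ)
    (t : (Fin n → ↥S) → (Fin n → ↥S) → Prop)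
    (htrans : ∀ x ∈ sortedTuples S n, ∀ y ∈ sortedTuples S n, ∀ z ∈ sortedTuples S n,
      t x y → t y z → t x z)
    (hantisymm : ∀ x ∈ sortedTuples S n, ∀ y ∈ sortedTuples S n, t x y → t y x → x = y)
    (hmono : ∀ x ∈ sortedTuples S n, ∀ y ∈ sortedTuples S n, (∀ i, x i ≤ y i) → t x y)
    (hneT : ∀ z ∈ sortedTuples S n, (intLikelySorted S n (upperSet S n t z) α).Nonempty)
    (hneL : ∀ z ∈ sortedTuples S n, (intLikelySorted S n (upperSet S n lexLowLE z) α).Nonempty)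
    (x : Fin n → ↥S) (hx : x ∈ sortedTuples S n)
    (s s' : ↥S)
    (h1 : t (fun _ => s) x) (h2 : t x (fun _ => s')) :
    pessimal S n lexHighLE α (fun _ => s) ≤ pessimal S n t α x ∧
      pessimal S n t α x ≤ pessimal S n lexLowLE α (fun _ => s') := by
  have hs : (fun _ : Fin n => s) ∈ sortedTuples S n := monotone_const
  have hs' : (fun _ : Fin n => s') ∈ sortedTuples S n := monotone_const
  have hsubH : upperSet S n t x ⊆ upperSet S n lexHighLE (fun _ => s) := by
    rintro y ⟨hy, hxy⟩
    refine ⟨hy, (Monotone.forall_le_or_lexHighLE_const hy s).elim (fun hys => ?_) id⟩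
    have hsy : t (fun _ => s) y := htrans _ hs _ hx _ hy h1 hxy
    exact Or.inl (hantisymm _ hs _ hy hsy (hmono _ hy _ hs hys))
  have hsubL : upperSet S n lexLowLE (fun _ => s') ⊆ upperSet S n t x := by
    rintro y ⟨hy, hs'y⟩
    exact ⟨hy, htrans _ hx _ hs' _ hy h2
      (hmono _ hs' _ hy (Monotone.const_le_of_lexLowLE_const hy hs'y))⟩
  exact ⟨pessimal_le_pessimal_of_upperSet_subset hS (hneT x hx) hsubH,
    pessimal_le_pessimal_of_upperSet_subset hS (hneL _ hs') hsubL⟩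

/-- for a monotone total order `T` on `Ω`, a sample `x ∈ Ω`, and
constant tuples `𝑺 ≤_T x ≤_T 𝑺'`, we have
`B_{T_h}^*(𝑺) ≤ B_T^*(x) ≤ B_{T_ℓ}^*(𝑺')`. -/
theorem stmt12 (S : Finset ℝ) (hS : S.Nonempty) (n : ℕ) (hn : 1 ≤ n)
    (α : ℝ) (hα0 : 0 ≤ α) (hα1 : α < 1)
    (t : (Fin n → ↥S) → (Fin n → ↥S) → Prop)
    (hrefl : ∀ x ∈ sortedTuples S n, t x x)
    (htrans : ∀ x ∈ sortedTuples S n, ∀ y ∈ sortedTuples S n, ∀ z ∈ sortedTuples S n,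
      t x y → t y z → t x z)
    (hantisymm : ∀ x ∈ sortedTuples S n, ∀ y ∈ sortedTuples S n, t x y → t y x → x = y)
    (htotal : ∀ x ∈ sortedTuples S n, ∀ y ∈ sortedTuples S n, t x y ∨ t y x)
    (hmono : ∀ x ∈ sortedTuples S n, ∀ y ∈ sortedTuples S n, (∀ i, x i ≤ y i) → t x y)
    (hneT : ∀ z ∈ sortedTuples S n, (intLikelySorted S n (upperSet S n t z) α).Nonempty)
    (hneL : ∀ z ∈ sortedTuples S n, (intLikelySorted S n (upperSet S n lexLowLE z) α).Nonempty)
    (hneH : ∀ z ∈ sortedTuples S n, (intLikelySorted S n (upperSet S n lexHighLE z) α).Nonempty)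
    (x : Fin n → ↥S) (hx : x ∈ sortedTuples S n)
    (s s' : ↥S)
    (h1 : t (fun _ => s) x) (h2 : t x (fun _ => s')) :
    pessimal S n lexHighLE α (fun _ => s) ≤ pessimal S n t α x ∧
      pessimal S n t α x ≤ pessimal S n lexLowLE α (fun _ => s') :=
  stmt12_general S hS n α t htrans hantisymm hmono hneT hneL x hx s s' h1 h2

end
end

section
/- Fix α ∈ [0,1) and s ∈ S with S_min < s < S_max, and let s' be the smallest element of S greater than s. Let 𝑺 = (s,…,s) be the constant n-tuple. Then S_min·(1−α)^{1/n} + s·(1 − (1−α)^{1/n}) ≤ B_{T_h}^*(𝑺) ≤ S_min·(1−α)^{1/n} + s'·(1 − (1−α)^{1/n}), where by the characterization of T_h the upper set is Ω(𝑺, T_h) = {y ∈ Ω : y = 𝑺 or s < y_n} (y_n the largest entry of y). -/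
noncomputable section

/-!
On the upper set of `𝑺 = (s,…,s)` a sample is accepted iff it is constant `s` or has an entry
above `s`, so `P_F = F(s)^n + 1 - F(≤ s)^n ≤ 1 - F(< s)^n` by superadditivity of `t ↦ t^n`.
Hence `P_F > α` forces `F(< s) < β := (1-α)^{1/n}`, and a distribution putting mass at most `β`
below `s` has mean at least `S_min β + s (1 - β)`. Conversely the distributions with mass `p < β`
at `S_min` and `1 - p` at `s'` are likely; their limit `p → β` lies in `𝒻` and has mean
`S_min β + s' (1 - β)`.
-/

open Finset Filter

section Probability

variable {S : Finset ℝ} {n : ℕ} (F : EuclideanSpace ℝ ↥S)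

open Classical in
theorem probOf_forall (p : ↥S → Prop) :
    probOf S n F {y | ∀ i, p (y i)} = (∑ t, if p t then F t else 0) ^ n := by
  rw [Fintype.sum_pow, probOf]
  refine sum_congr rfl fun y _ => ?_
  simp [prod_ite_zero]

theorem probOf_univ : probOf S n F Set.univ = (∑ t, F t) ^ n := by
  simpa using probOf_forall (n := n) F fun _ => True

theorem probOf_union {A B : Set (Fin n → ↥S)} (hAB : Disjoint A B) :
    probOf S n F (A ∪ B) = probOf S n F A + probOf S n F B := by
  unfold probOf
  rw [← sum_add_distrib]
  refine sum_congr rfl fun y _ => ?_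
  by_cases hA : y ∈ A
  · simp [hA, Set.disjoint_left.1 hAB hA]
  · by_cases hB : y ∈ B <;> simp [hA, hB]

theorem probOf_compl (A : Set (Fin n → ↥S)) :
    probOf S n F Aᶜ = probOf S n F Set.univ - probOf S n F A := by
  rw [eq_sub_iff_add_eq, ← probOf_union F disjoint_compl_left, Set.compl_union_self]

end Probability

theorem lexHighLE_const_iff {n : ℕ} {α : Type*} [LinearOrder α] {x : Fin n → α}
    (hx : Monotone x) (s : α) :
    lexHighLE (fun _ => s) x ↔ (∀ i, x i = s) ∨ ∃ i, s < x i := by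
  constructor
  · rintro (h | ⟨i, hi, -⟩)
    · exact Or.inl fun i => (congrFun h i).symm
    · exact Or.inr ⟨i, hi⟩
  · rintro (h | ⟨j, hj⟩)
    · exact Or.inl (funext fun i => (h i).symm)
    · have hlast : ∀ k : Fin n, k ≤ ⟨n - 1, Nat.sub_one_lt_of_lt j.2⟩ := fun k => Fin.le_def.2 (Nat.le_sub_one_of_lt k.2)
      exact Or.inr ⟨_, hj.trans_le (hx (hlast j)), fun k hk => absurd (hlast k) hk.not_ge⟩

section ConstantSample

variable {S : Finset ℝ} {n : ℕ}

theorem sortTup_mem_upperSet_const_iff (s : ↥S) (y : Fin n → ↥S) :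
    sortTup S n y ∈ upperSet S n lexHighLE (fun _ => s) ↔ (∀ i, y i = s) ∨ ∃ i, s < y i := by
  have hsorted : Monotone (sortTup S n y) := Tuple.monotone_sort y
  rw [upperSet, Set.mem_sep_iff, lexHighLE_const_iff hsorted, and_iff_right (show sortTup S n y ∈ sortedTuples S n from hsorted)]
  simp only [sortTup, Function.comp_apply]
  rw [(Tuple.sort y).forall_congr_left, (Tuple.sort y).exists_congr_left]
  simp

theorem probSorted_upperSet_const (F : EuclideanSpace ℝ ↥S) (s : ↥S) :
    probSorted S n F (upperSet S n lexHighLE fun _ => s) =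
      F s ^ n + ((∑ t, F t) ^ n - (∑ t, if t ≤ s then F t else 0) ^ n) := by
  classical
  have hevent : {y | sortTup S n y ∈ upperSet S n lexHighLE fun _ => s} =
      {y | ∀ i, y i = s} ∪ {y | ∀ i, y i ≤ s}ᶜ := by
    ext y
    simp [sortTup_mem_upperSet_const_iff]
  have hdisj : Disjoint {y : Fin n → ↥S | ∀ i, y i = s} {y | ∀ i, y i ≤ s}ᶜ :=
    Set.disjoint_compl_right_iff_subset.2 fun y hy i => (hy i).le
  rw [probSorted, hevent, probOf_union F hdisj, probOf_compl, probOf_univ,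
    probOf_forall F (· = s), probOf_forall F (· ≤ s)]
  simp

theorem sum_le_eq_add_sum_lt (F : EuclideanSpace ℝ ↥S) (s : ↥S) :
    (∑ t, if t ≤ s then F t else 0) = F s + ∑ t, if t < s then F t else 0 := by
  classical
  have hsplit : ∀ t : ↥S, (if t ≤ s then F t else 0) =
      (if t = s then F t else 0) + if t < s then F t else 0 := by
    intro t
    rcases lt_trichotomy t s with h | rfl | h
    · simp [h, h.le, h.ne]
    · simp
    · simp [h.not_ge, h.ne', h.not_gt]
  rw [sum_congr rfl fun t _ => hsplit t, sum_add_distrib, Fintype.sum_ite_eq']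

end ConstantSample

section LowerBound

variable {S : Finset ℝ} {n : ℕ} {F : EuclideanSpace ℝ ↥S}

theorem le_distMean_of_forall_le (hF : F ∈ distSet S) {m : ℝ} (hm : ∀ t : ↥S, m ≤ t) (s : ↥S) :
    m * (∑ t, if t < s then F t else 0) + s * (1 - ∑ t, if t < s then F t else 0) ≤
      distMean S F := by
  obtain ⟨hF0, hF1⟩ := hF
  calc m * (∑ t, if t < s then F t else 0) + s * (1 - ∑ t, if t < s then F t else 0)
      = ∑ t, F t * (if t < s then m else s) := by
        simp only [mul_ite, ← hF1, mul_sub, mul_sum, ← sum_sub_distrib, ← sum_add_distrib]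
        refine sum_congr rfl fun t _ => ?_
        split_ifs <;> ring
    _ ≤ ∑ t, F t * (t : ℝ) := by
        refine sum_le_sum fun t _ => mul_le_mul_of_nonneg_left ?_ (hF0 t)
        split_ifs with h
        exacts [hm t, not_lt.1 h]

theorem sum_lt_pow_lt_of_mem_intLikelySorted {α : ℝ} {s : ↥S} (hn : n ≠ 0)
    (hF : F ∈ intLikelySorted S n (upperSet S n lexHighLE fun _ => s) α) :
    (∑ t, if t < s then F t else 0) ^ n < 1 - α := by
  obtain ⟨⟨hF0, hF1⟩, hprob⟩ := hF
  have hbelow : 0 ≤ ∑ t, if t < s then F t else 0 :=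
    sum_nonneg fun t _ => by split_ifs; exacts [hF0 t, le_rfl]
  have hsuper := pow_add_pow_le (hF0 s) hbelow hn
  rw [probSorted_upperSet_const, hF1, one_pow, sum_le_eq_add_sum_lt] at hprob
  linarith

theorem le_distMean_of_mem_intLikelySorted {α β m : ℝ} {s : ↥S} (hm : ∀ t : ↥S, m ≤ t)
    (hn : n ≠ 0) (hβ : 0 ≤ β) (hβn : β ^ n = 1 - α)
    (hF : F ∈ intLikelySorted S n (upperSet S n lexHighLE fun _ => s) α) :
    m * β + s * (1 - β) ≤ distMean S F := by
  set r := ∑ t, if t < s then F t else 0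
  have hr : r ≤ β := by
    have hr0 : 0 ≤ r := sum_nonneg fun t _ => by split_ifs; exacts [hF.1.1 t, le_rfl]
    have hrn := sum_lt_pow_lt_of_mem_intLikelySorted hn hF
    rw [← hβn] at hrn
    exact ((pow_lt_pow_iff_left₀ hr0 hβ hn).1 hrn).le
  have hmean := le_distMean_of_forall_le hF.1 hm s
  linarith [mul_nonneg (sub_nonneg.2 hr) (sub_nonneg.2 (hm s))]

end LowerBound

section TwoPoint

variable {S : Finset ℝ}

def twoPoint (a b : ↥S) (p : ℝ) : EuclideanSpace ℝ ↥S :=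
  p • EuclideanSpace.single a 1 + (1 - p) • EuclideanSpace.single b 1

theorem sum_twoPoint_mul (a b : ↥S) (p : ℝ) (g : ↥S → ℝ) :
    ∑ t, twoPoint a b p t * g t = p * g a + (1 - p) * g b := by
  classical
  simp [twoPoint, PiLp.single_apply, add_mul, sum_add_distrib, ite_mul]

theorem distMean_twoPoint (a b : ↥S) (p : ℝ) :
    distMean S (twoPoint a b p) = a * p + b * (1 - p) := by
  rw [distMean, sum_twoPoint_mul]
  ring

theorem twoPoint_mem_distSet (a b : ↥S) {p : ℝ} (hp0 : 0 ≤ p) (hp1 : p ≤ 1) :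
    twoPoint a b p ∈ distSet S := by
  classical
  refine ⟨fun t => ?_, by simpa using sum_twoPoint_mul a b p 1⟩
  simp only [twoPoint, PiLp.add_apply, PiLp.smul_apply, PiLp.single_apply, smul_eq_mul]
  split_ifs <;> linarith

variable {n : ℕ} {α : ℝ} {a s b : ↥S}

theorem twoPoint_mem_intLikelySorted (has : a ≤ s) (hsb : s < b) {p : ℝ} (hp0 : 0 ≤ p)
    (hp1 : p ≤ 1) (hp : p ^ n < 1 - α) :
    twoPoint a b p ∈ intLikelySorted S n (upperSet S n lexHighLE fun _ => s) α := by
  have hmem := twoPoint_mem_distSet a b hp0 hp1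
  refine ⟨hmem, ?_⟩
  have hle : (∑ t, if t ≤ s then twoPoint a b p t else 0) = p := by
    simpa [has, hsb.not_ge] using sum_twoPoint_mul a b p fun t => if t ≤ s then 1 else 0
  rw [probSorted_upperSet_const, hmem.2, hle, one_pow]
  have := pow_nonneg (hmem.1 s) n
  linarith

theorem twoPoint_mem_likelySorted (has : a ≤ s) (hsb : s < b) (hn : n ≠ 0) {β : ℝ}
    (hβ0 : 0 < β) (hβ1 : β ≤ 1) (hβn : β ^ n = 1 - α) :
    twoPoint a b β ∈ likelySorted S n (upperSet S n lexHighLE fun _ => s) α := by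
  have hcont : Continuous (twoPoint a b) := by unfold twoPoint; fun_prop
  refine mem_closure_of_tendsto ((hcont.tendsto β).mono_left nhdsWithin_le_nhds)
    (eventually_of_mem (Ioo_mem_nhdsLT hβ0) fun p hp => ?_)
  exact twoPoint_mem_intLikelySorted has hsb hp.1.le (hp.2.le.trans hβ1)
    (hβn ▸ pow_lt_pow_left₀ hp.2 hp.1.le hn)

end TwoPoint

section Pessimal

variable {S : Finset ℝ} {n : ℕ} {A : Set (Fin n → ↥S)} {α c : ℝ}

theorem le_distMean_of_mem_likelySorted (hc : ∀ F ∈ intLikelySorted S n A α, c ≤ distMean S F)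
    {F : EuclideanSpace ℝ ↥S} (hF : F ∈ likelySorted S n A α) : c ≤ distMean S F := by
  have hcont : Continuous (distMean S) := by unfold distMean; fun_prop
  exact closure_minimal hc (isClosed_le continuous_const hcont) hF

variable {r : (Fin n → ↥S) → (Fin n → ↥S) → Prop} {x : Fin n → ↥S}

theorem le_pessimal (hne : (likelySorted S n (upperSet S n r x) α).Nonempty)
    (hc : ∀ F ∈ intLikelySorted S n (upperSet S n r x) α, c ≤ distMean S F) :
    c ≤ pessimal S n r α x :=
  le_csInf (hne.image _) (Set.forall_mem_image.2 fun _ => le_distMean_of_mem_likelySorted hc)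

theorem pessimal_le (hc : ∀ F ∈ intLikelySorted S n (upperSet S n r x) α, c ≤ distMean S F)
    {F : EuclideanSpace ℝ ↥S} (hF : F ∈ likelySorted S n (upperSet S n r x) α) :
    pessimal S n r α x ≤ distMean S F :=
  csInf_le ⟨c, Set.forall_mem_image.2 fun _ => le_distMean_of_mem_likelySorted hc⟩ ⟨F, hF, rfl⟩

end Pessimal

theorem stmt15_general (S : Finset ℝ) (hS : S.Nonempty) (n : ℕ) (hn : 1 ≤ n)
    (α : ℝ) (hα0 : 0 ≤ α) (hα1 : α < 1)
    (s : ↥S)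
    (s' : ↥S) (hs' : IsLeast {t : ↥S | s < t} s') :
    S.min' hS * (1 - α) ^ ((1 : ℝ) / n) + (s : ℝ) * (1 - (1 - α) ^ ((1 : ℝ) / n)) ≤
        pessimal S n lexHighLE α (fun _ => s) ∧
      pessimal S n lexHighLE α (fun _ => s) ≤
        S.min' hS * (1 - α) ^ ((1 : ℝ) / n) + (s' : ℝ) * (1 - (1 - α) ^ ((1 : ℝ) / n)) := by
  have hn0 : n ≠ 0 := by omega
  have hα : 0 < 1 - α := by linarith
  set β := (1 - α) ^ ((1 : ℝ) / n)
  have hβ0 : 0 < β := Real.rpow_pos_of_pos hα _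
  have hβ1 : β ≤ 1 := Real.rpow_le_one hα.le (by linarith) (by positivity)
  have hβn : β ^ n = 1 - α := by
    simp only [β, one_div]
    exact Real.rpow_inv_natCast_pow hα.le hn0
  let m : ↥S := ⟨S.min' hS, S.min'_mem hS⟩
  have hm : ∀ t : ↥S, m ≤ t := fun t => S.min'_le t t.2
  have hlow := fun F => le_distMean_of_mem_intLikelySorted (F := F) (s := s) hm hn0 hβ0.le hβn
  have hmem := twoPoint_mem_likelySorted (hm s) hs'.1 hn0 hβ0 hβ1 hβn
  exact ⟨le_pessimal ⟨_, hmem⟩ hlow, (pessimal_le hlow hmem).trans_eq (distMean_twoPoint m s' β)⟩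

/-- bounds on the pessimal bound for the high lexicographic order
at a homogeneous sample `𝑺 = (s,…,s)` with `S_min < s < S_max`, where `s'` is
the smallest element of `S` greater than `s`:
`S_min (1-α)^{1/n} + s (1 - (1-α)^{1/n}) ≤ B_{T_h}^*(𝑺)
  ≤ S_min (1-α)^{1/n} + s' (1 - (1-α)^{1/n})`. -/
theorem stmt15 (S : Finset ℝ) (hS : S.Nonempty) (n : ℕ) (hn : 1 ≤ n)
    (α : ℝ) (hα0 : 0 ≤ α) (hα1 : α < 1)
    (s : ↥S) (hsmin : S.min' hS < (s : ℝ)) (hsmax : (s : ℝ) < S.max' hS)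
    (s' : ↥S) (hs' : IsLeast {t : ↥S | s < t} s') :
    S.min' hS * (1 - α) ^ ((1 : ℝ) / n) + (s : ℝ) * (1 - (1 - α) ^ ((1 : ℝ) / n)) ≤
        pessimal S n lexHighLE α (fun _ => s) ∧
      pessimal S n lexHighLE α (fun _ => s) ≤
        S.min' hS * (1 - α) ^ ((1 : ℝ) / n) + (s' : ℝ) * (1 - (1 - α) ^ ((1 : ℝ) / n)) :=
  stmt15_general S hS n hn α hα0 hα1 s s' hs'

end
end
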